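/- arXiv:1410.6260 — 3 statements merged into one kernel-verified Lean document; each statement's English description precedes it below -/
import Mathlib

section
/- Let M ≥ 1 be a constant, μ a probability measure on a measurable space, and f a measurable function with 0 ≤ f ≤ M, with f > 0 μ-a.e. and ∫ f dμ > 0. Set g = ln f − ∫ ln f dμ. Then |ln(∫ f dμ) − ∫ ln f dμ| ≤ M · (∫ g² dμ)^{1/2} / ∫ f dμ. -/
/-!
Both sides are controlled by Jensen's inequality. Convexity of `exp` gives `∫ ln f ≤ ln ∫ f`, so
the absolute value can be dropped. Convexity of `t ↦ t ln t` gives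
`(∫ f) ln (∫ f) ≤ ∫ f ln f`, i.e. `(∫ f) (ln ∫ f − ∫ ln f) ≤ ∫ f g`, and since `0 ≤ f ≤ M`,
`∫ f g ≤ M ∫ |g| ≤ M (∫ g²)^{1/2}`, the last step being Jensen for `t ↦ t²`.
-/

open MeasureTheory Real

section Jensen

variable {Ω : Type*} [MeasurableSpace Ω] {μ : Measure Ω} [IsProbabilityMeasure μ]

theorem integral_log_le_log_integral {f : Ω → ℝ} (hpos : ∀ᵐ x ∂μ, 0 < f x)
    (hf : Integrable f μ) (hlog : Integrable (fun x => log (f x)) μ) :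
    ∫ x, log (f x) ∂μ ≤ log (∫ x, f x ∂μ) := by
  have hexp_log : (fun x => exp (log (f x))) =ᵐ[μ] f := hpos.mono fun _ hx => exp_log hx
  have hjensen : exp (∫ x, log (f x) ∂μ) ≤ ∫ x, f x ∂μ := by
    rw [← integral_congr_ae hexp_log]
    exact convexOn_exp.map_integral_le continuous_exp.continuousOn isClosed_univ
      (Filter.Eventually.of_forall fun _ => Set.mem_univ _) hlog (hf.congr hexp_log.symm)
  exact (le_log_iff_exp_le ((exp_pos _).trans_le hjensen)).2 hjensen

theorem integral_mul_log_integral_le {f : Ω → ℝ} (hf0 : ∀ᵐ x ∂μ, 0 ≤ f x)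
    (hf : Integrable f μ) (hflog : Integrable (fun x => f x * log (f x)) μ) :
    (∫ x, f x ∂μ) * log (∫ x, f x ∂μ) ≤ ∫ x, f x * log (f x) ∂μ :=
  convexOn_mul_log.map_integral_le continuous_mul_log.continuousOn isClosed_Ici hf0 hf hflog

theorem integral_abs_le_sqrt_integral_sq {g : Ω → ℝ} (hg : Integrable g μ)
    (hg2 : Integrable (fun x => g x ^ 2) μ) :
    ∫ x, |g x| ∂μ ≤ sqrt (∫ x, g x ^ 2 ∂μ) := by
  have hjensen : (∫ x, |g x| ∂μ) ^ 2 ≤ ∫ x, |g x| ^ 2 ∂μ :=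
    (convexOn_pow 2).map_integral_le (continuous_pow 2).continuousOn isClosed_Ici
      (Filter.Eventually.of_forall fun x => abs_nonneg (g x)) hg.abs (by simpa [Function.comp_def] using hg2)
  simp only [sq_abs] at hjensen
  exact (le_sqrt (integral_nonneg fun x => abs_nonneg _)
    (integral_nonneg fun x => sq_nonneg _)).2 hjensen

end Jensen

theorem integral_mul_le_mul_integral_abs {Ω : Type*} [MeasurableSpace Ω] {μ : Measure Ω}
    {f g : Ω → ℝ} {M : ℝ} (hf0 : ∀ᵐ x ∂μ, 0 ≤ f x) (hfM : ∀ᵐ x ∂μ, f x ≤ M)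
    (hfg : Integrable (fun x => f x * g x) μ) (hg : Integrable g μ) :
    ∫ x, f x * g x ∂μ ≤ M * ∫ x, |g x| ∂μ := by
  rw [← integral_const_mul]
  refine integral_mono_ae hfg (hg.abs.const_mul M) ?_
  filter_upwards [hf0, hfM] with x h0 hM
  calc f x * g x ≤ f x * |g x| := mul_le_mul_of_nonneg_left (le_abs_self _) h0
    _ ≤ M * |g x| := mul_le_mul_of_nonneg_right hM (abs_nonneg _)

theorem stmt_1_general {Ω : Type*} [MeasurableSpace Ω] (μ : Measure Ω) [IsProbabilityMeasure μ]
    (M : ℝ) (hM : 1 ≤ M) (f : Ω → ℝ)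
    (hfM : ∀ᵐ x ∂μ, f x ≤ M) (hfpos : ∀ᵐ x ∂μ, 0 < f x)
    (hfint : Integrable f μ) (hlint : Integrable (fun x => Real.log (f x)) μ)
    (hfmean : 0 < ∫ x, f x ∂μ)
    (g : Ω → ℝ) (hg : g = fun x => Real.log (f x) - ∫ y, Real.log (f y) ∂μ)
    (hg2 : Integrable (fun x => (g x) ^ 2) μ) :
    |Real.log (∫ x, f x ∂μ) - ∫ x, Real.log (f x) ∂μ| ≤
      M * Real.sqrt (∫ x, (g x) ^ 2 ∂μ) / ∫ x, f x ∂μ := by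
  set I := ∫ x, f x ∂μ
  set m := ∫ x, log (f x) ∂μ
  have hf0 : ∀ᵐ x ∂μ, 0 ≤ f x := hfpos.mono fun _ => le_of_lt
  have hgi : Integrable g μ := hg ▸ hlint.sub (integrable_const m)
  have hfg : Integrable (fun x => f x * g x) μ := by
    refine hgi.bdd_mul (c := M) hfint.aestronglyMeasurable ?_
    filter_upwards [hf0, hfM] with x h0 hM
    rwa [norm_of_nonneg h0]
  have hflog : (fun x => f x * log (f x)) = fun x => f x * g x + m * f x := by
    funext x; rw [hg]; ring
  have hjensen := integral_mul_log_integral_le hf0 hfint (hflog ▸ hfg.add (hfint.const_mul m))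
  rw [hflog, integral_add hfg (hfint.const_mul m), integral_const_mul] at hjensen
  rw [abs_of_nonneg (sub_nonneg.2 (integral_log_le_log_integral hfpos hfint hlint)),
    le_div_iff₀ hfmean]
  calc (log I - m) * I ≤ ∫ x, f x * g x ∂μ := by linarith
    _ ≤ M * ∫ x, |g x| ∂μ := integral_mul_le_mul_integral_abs hf0 hfM hfg hgi
    _ ≤ M * sqrt (∫ x, g x ^ 2 ∂μ) :=
      mul_le_mul_of_nonneg_left (integral_abs_le_sqrt_integral_sq hgi hg2) (by linarith)

/-- Nash-type inequality: for a probability measure `μ` and `0 ≤ f ≤ M` with `f > 0` a.e.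
and `∫ f dμ > 0`, setting `g = ln f − ∫ ln f dμ`, we have
`|ln ∫ f dμ − ∫ ln f dμ| ≤ M ‖g‖_{L²(μ)} / ∫ f dμ`. -/
theorem stmt_1 {Ω : Type*} [MeasurableSpace Ω] (μ : Measure Ω) [IsProbabilityMeasure μ]
    (M : ℝ) (hM : 1 ≤ M) (f : Ω → ℝ) (hfm : Measurable f)
    (hf0 : 0 ≤ᵐ[μ] f) (hfM : ∀ᵐ x ∂μ, f x ≤ M) (hfpos : ∀ᵐ x ∂μ, 0 < f x)
    (hfint : Integrable f μ) (hlint : Integrable (fun x => Real.log (f x)) μ)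
    (hfmean : 0 < ∫ x, f x ∂μ)
    (g : Ω → ℝ) (hg : g = fun x => Real.log (f x) - ∫ y, Real.log (f y) ∂μ)
    (hg2 : Integrable (fun x => (g x) ^ 2) μ) :
    |Real.log (∫ x, f x ∂μ) - ∫ x, Real.log (f x) ∂μ| ≤
      M * Real.sqrt (∫ x, (g x) ^ 2 ∂μ) / ∫ x, f x ∂μ :=
  stmt_1_general μ M hM f hfM hfpos hfint hlint hfmean g hg hg2
end

section
/- For α > 0, q > 1 with q − 3 + αq < −1, and ρ ∈ (0,1), the integral ∫_0^{3ρ} (ln|ln(r/3)|)^{αq} r^{1−q} dr is bounded by C (ln ln(3/ρ))^{2αq} ρ^{2−q} for a constant C depending only on α and q. -/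
set_option maxHeartbeats 1000000

open Real MeasureTheory intervalIntegral

/-- Elementary integral estimate:
`∫_0^{3ρ} (ln|ln(r/3)|)^{αq} r^{1−q} dr ≤ C (ln ln(3/ρ))^{2αq} ρ^{2−q}`. -/
theorem stmt_8 (α q : ℝ) (hα : 0 < α) (hq : 1 < q) (hαq : q - 3 + α * q < -1) :
    ∃ C > (0:ℝ), ∀ ρ ∈ Set.Ioo (0:ℝ) 1,
      (∫ r in (0:ℝ)..(3 * ρ), (Real.log |Real.log (r / 3)|) ^ (α * q) * r ^ (1 - q))
        ≤ C * (Real.log (Real.log (3 / ρ))) ^ (2 * α * q) * ρ ^ (2 - q) := by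
  have hq0 : (0:ℝ) < q := lt_trans one_pos hq
  have hp0 : 0 < α * q := mul_pos hα hq0
  have hq2 : q < 2 := by linarith
  set p := α * q with hpdef
  set ε := (2 - q) / 2 with hεdef
  set δ := ε / p with hδdef
  set c := Real.log (Real.log 3) with hcdef
  clear_value p
  have hε : 0 < ε := by rw [hεdef]; linarith
  clear_value ε
  have hδ : 0 < δ := by rw [hδdef]; exact div_pos hε hp0
  clear_value δ
  have he3 : Real.exp 1 < 3 := lt_trans Real.exp_one_lt_d9 (by norm_num)
  have hlog3 : 1 < Real.log 3 := (Real.lt_log_iff_exp_lt (by norm_num)).mpr he3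
  have hc : 0 < c := by rw [hcdef]; exact Real.log_pos hlog3
  clear_value c
  have h3δ1 : (1:ℝ) ≤ (3:ℝ) ^ δ := by
    calc (1:ℝ) = (3:ℝ) ^ (0:ℝ) := (Real.rpow_zero 3).symm
    _ ≤ (3:ℝ) ^ δ := Real.rpow_le_rpow_of_exponent_le (by norm_num) hδ.le
  set K₁ := (3:ℝ) ^ δ * (c⁻¹ + (c ^ 2 * δ)⁻¹) with hK1def
  clear_value K₁
  have hK₁ : 0 < K₁ := by
    rw [hK1def]
    have : (0:ℝ) < (3:ℝ) ^ δ := Real.rpow_pos_of_pos (by norm_num) _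
    positivity
  set D₂ := (2 * p) ^ p * (3:ℝ) ^ ((1:ℝ)/2) with hD2def
  clear_value D₂
  have hD₂ : 0 < D₂ := by
    rw [hD2def]
    have h1 : (0:ℝ) < (2*p) ^ p := Real.rpow_pos_of_pos (by linarith) _
    have h2 : (0:ℝ) < (3:ℝ) ^ ((1:ℝ)/2) := Real.rpow_pos_of_pos (by norm_num) _
    positivity
  have hKp : 0 < K₁ ^ p := Real.rpow_pos_of_pos hK₁ _
  have h3ε : (0:ℝ) < (3:ℝ) ^ ε := Real.rpow_pos_of_pos (by norm_num) _
  have hc2p : (0:ℝ) < c ^ (2*p) := Real.rpow_pos_of_pos hc _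
  have h312 : (0:ℝ) < (3:ℝ) ^ ((1:ℝ)/2) := Real.rpow_pos_of_pos (by norm_num) _
  refine ⟨K₁ ^ p * (3:ℝ) ^ ε / ε + 2 * (3:ℝ) ^ ((1:ℝ)/2) * D₂ / c ^ (2*p), by positivity, ?_⟩
  rintro ρ ⟨hρ0, hρ1⟩
  have hρ3 : (0:ℝ) < 3 * ρ := by linarith
  have h3ρ3 : 3 * ρ < 3 := by linarith
  set A := Real.log (Real.log (3 / ρ)) with hAdef
  clear_value A
  have hlog3ρ : Real.log 3 ≤ Real.log (3 / ρ) := by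
    apply Real.log_le_log (by norm_num)
    rw [le_div_iff₀ hρ0]; linarith
  have hB1 : (1:ℝ) < Real.log (3 / ρ) := lt_of_lt_of_le hlog3 hlog3ρ
  have hA : c ≤ A := by rw [hAdef, hcdef]; exact Real.log_le_log (by linarith) hlog3ρ
  have hA0 : 0 < A := lt_of_lt_of_le hc hA
  set s := Set.Ioc (0:ℝ) (3 * ρ) with hsdef
  clear_value s
  have hmeas : MeasurableSet s := by rw [hsdef]; exact measurableSet_Ioc
  set Φ : ℝ → ℝ := fun r => K₁ ^ p * A ^ (2*p) * ρ ^ ε * r ^ (-(q/2))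
      + D₂ * (3 - r) ^ (-(1:ℝ)/2) with hΦdef
  clear_value Φ
  -- pointwise bound
  have key : ∀ r ∈ s, |Real.log |Real.log (r / 3)| ^ p * r ^ (1 - q)| ≤ Φ r := by
    rw [hsdef]
    rintro r ⟨hr0, hr3ρ⟩
    have hr3 : r < 3 := lt_of_le_of_lt hr3ρ h3ρ3
    have h3r0 : 0 < 3 - r := by linarith
    have hlogr_pos : 0 < Real.log (3 / r) := Real.log_pos (by rw [lt_div_iff₀ hr0]; linarith)
    have habs : |Real.log (r / 3)| = Real.log (3 / r) := by
      rw [show (3:ℝ)/r = (r/3)⁻¹ by rw [inv_div], Real.log_inv, abs_of_neg]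
      have : Real.log (r/3) < 0 :=
        Real.log_neg (by positivity) (by rw [div_lt_one (by norm_num : (0:ℝ) < 3)]; linarith)
      linarith
    rw [habs]
    have hr1q : (0:ℝ) < r ^ (1 - q) := Real.rpow_pos_of_pos hr0 _
    have hAp2 : (0:ℝ) < A ^ (2*p) := Real.rpow_pos_of_pos hA0 _
    have hρε : (0:ℝ) < ρ ^ ε := Real.rpow_pos_of_pos hρ0 _
    have hterm2 : (0:ℝ) ≤ D₂ * (3 - r) ^ (-(1:ℝ)/2) :=
      mul_nonneg hD₂.le (Real.rpow_nonneg h3r0.le _)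
    have hterm1 : (0:ℝ) ≤ K₁ ^ p * A ^ (2*p) * ρ ^ ε * r ^ (-(q/2)) := by
      have : (0:ℝ) < r ^ (-(q/2)) := Real.rpow_pos_of_pos hr0 _
      positivity
    by_cases hcase : r ≤ 3 / Real.exp 1
    · -- good region
      have h1le : 1 ≤ Real.log (3 / r) := by
        rw [Real.le_log_iff_exp_le (by positivity), le_div_iff₀ hr0]
        calc Real.exp 1 * r ≤ Real.exp 1 * (3 / Real.exp 1) :=
              mul_le_mul_of_nonneg_left hcase (Real.exp_pos 1).le
        _ = 3 := by field_simp
      have hb0 : 0 ≤ Real.log (Real.log (3 / r)) := Real.log_nonneg h1le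
      set z := (ρ / r) ^ δ with hzdef
      clear_value z
      have hz0 : 0 < z := by rw [hzdef]; exact Real.rpow_pos_of_pos (by positivity) _
      have claim : Real.log (Real.log (3 / r)) ≤ K₁ * (A * A) * z := by
        by_cases hrρ : r ≤ ρ
        · set y := Real.log (ρ / r) with hydef
          clear_value y
          have hy0 : 0 ≤ y := by
            rw [hydef]; exact Real.log_nonneg ((one_le_div hr0).mpr hrρ)
          have hsplit : Real.log (3 / r) = Real.log (3 / ρ) + y := by
            rw [hydef, ← Real.log_mul (by positivity) (by positivity)]
            congr 1; field_simp
          have hstep : Real.log (Real.log (3 / r)) ≤ A + y := by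
            rw [hsplit]
            have hE : Real.log (3/ρ) + y ≤ Real.log (3/ρ) * Real.exp y := by
              have e1 : Real.log (3/ρ) * (y + 1) ≤ Real.log (3/ρ) * Real.exp y :=
                mul_le_mul_of_nonneg_left (Real.add_one_le_exp y) (by linarith)
              have e2 : 1 * y ≤ Real.log (3/ρ) * y :=
                mul_le_mul_of_nonneg_right hB1.le hy0
              linarith [e1, e2]
            calc Real.log (Real.log (3/ρ) + y)
                ≤ Real.log (Real.log (3/ρ) * Real.exp y) :=
                  Real.log_le_log (by linarith) hE
            _ = A + y := by
                rw [Real.log_mul (by linarith) (Real.exp_ne_zero y), Real.log_exp, hAdef]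
          have hzy : z = Real.exp (δ * y) := by
            rw [hzdef, hydef, Real.rpow_def_of_pos (by positivity), mul_comm]
          have hz1 : 1 ≤ z := by rw [hzy]; exact Real.one_le_exp (by positivity)
          have hyz : y ≤ z / δ := by
            rw [hzy, le_div_iff₀ hδ]
            linarith [Real.add_one_le_exp (δ * y), Real.exp_pos (δ * y)]
          have harith : A + y ≤ (c⁻¹ + (c^2*δ)⁻¹) * (A*A) * z := by
            have h1 : A ≤ c⁻¹ * (A*A) * z := by
              rw [inv_mul_eq_div, div_mul_eq_mul_div, le_div_iff₀ hc]
              have e1 : A * c ≤ A * A := mul_le_mul_of_nonneg_left hA hA0.le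
              have e2 : A * A * 1 ≤ A * A * z :=
                mul_le_mul_of_nonneg_left hz1 (by positivity)
              linarith
            have h2 : y ≤ (c^2*δ)⁻¹ * (A*A) * z := by
              have hcc : c * c ≤ A * A := mul_le_mul hA hA hc.le hA0.le
              have e3 : c * c * z * δ ≤ A * A * z * δ :=
                mul_le_mul_of_nonneg_right
                  (mul_le_mul_of_nonneg_right hcc hz0.le) hδ.le
              have : z/δ ≤ (c^2*δ)⁻¹ * (A*A) * z := by
                rw [div_le_iff₀ hδ, inv_mul_eq_div, div_mul_eq_mul_div, div_mul_eq_mul_div,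
                  le_div_iff₀ (by positivity)]
                linarith [e3]
              linarith
            linarith
          calc Real.log (Real.log (3 / r)) ≤ A + y := hstep
          _ ≤ (c⁻¹ + (c^2*δ)⁻¹) * (A*A) * z := harith
          _ ≤ K₁ * (A*A) * z := by
              rw [hK1def]
              have hX : (0:ℝ) ≤ (c⁻¹ + (c^2*δ)⁻¹) * (A*A) * z := by positivity
              calc (c⁻¹ + (c^2*δ)⁻¹) * (A*A) * z
                  ≤ ((c⁻¹ + (c^2*δ)⁻¹) * (A*A) * z) * (3:ℝ)^δ :=
                    le_mul_of_one_le_right hX h3δ1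
              _ = (3:ℝ)^δ * (c⁻¹ + (c^2*δ)⁻¹) * (A*A) * z := by ring
        · push_neg at hrρ
          have hb_le_A : Real.log (Real.log (3 / r)) ≤ A := by
            rw [hAdef]
            apply Real.log_le_log hlogr_pos
            apply Real.log_le_log (by positivity)
            exact div_le_div_of_nonneg_left (by norm_num) hρ0 hrρ.le
          have hz3 : (1:ℝ) ≤ (3:ℝ)^δ * z := by
            have h13 : ((1:ℝ)/3) ≤ ρ / r := by
              rw [div_le_div_iff₀ (by norm_num) hr0]; linarith
            have hle : ((1:ℝ)/3) ^ δ ≤ z := by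
              rw [hzdef]; exact Real.rpow_le_rpow (by norm_num) h13 hδ.le
            have hinv : ((1:ℝ)/3 : ℝ) ^ δ = ((3:ℝ)^δ)⁻¹ := by
              rw [show ((1:ℝ)/3) = (3:ℝ)⁻¹ by norm_num,
                ← Real.rpow_neg_one 3, ← Real.rpow_mul (by norm_num),
                ← Real.rpow_neg (by norm_num : (0:ℝ) ≤ 3)]
              ring_nf
            rw [hinv] at hle
            have h3δpos : (0:ℝ) < (3:ℝ)^δ := Real.rpow_pos_of_pos (by norm_num) δ
            calc (1:ℝ) = (3:ℝ)^δ * ((3:ℝ)^δ)⁻¹ := by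
                  rw [mul_inv_cancel₀ (ne_of_gt h3δpos)]
            _ ≤ (3:ℝ)^δ * z := mul_le_mul_of_nonneg_left hle h3δpos.le
          have h1 : A ≤ c⁻¹ * (A*A) := by
            rw [inv_mul_eq_div, le_div_iff₀ hc]
            exact mul_le_mul_of_nonneg_left hA hA0.le
          calc Real.log (Real.log (3 / r)) ≤ A := hb_le_A
          _ ≤ c⁻¹ * (A*A) := h1
          _ = c⁻¹ * (A*A) * 1 := by ring
          _ ≤ c⁻¹ * (A*A) * ((3:ℝ)^δ * z) :=
              mul_le_mul_of_nonneg_left hz3 (by positivity)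
          _ = (3:ℝ)^δ * c⁻¹ * (A*A) * z := by ring
          _ ≤ K₁ * (A*A) * z := by
              rw [hK1def]
              have h0 : (0:ℝ) ≤ (3:ℝ)^δ * (c^2*δ)⁻¹ * (A*A) * z := by
                have : (0:ℝ) < (3:ℝ)^δ := Real.rpow_pos_of_pos (by norm_num) δ
                positivity
              linarith [h0]
      -- finish good region
      have hFnn : 0 ≤ Real.log (Real.log (3/r)) ^ p * r ^ (1-q) :=
        mul_nonneg (Real.rpow_nonneg hb0 _) hr1q.le
      rw [abs_of_nonneg hFnn]
      have hstep1 : Real.log (Real.log (3/r)) ^ p * r ^ (1-q)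
          ≤ (K₁ * (A*A) * z) ^ p * r ^ (1-q) :=
        mul_le_mul_of_nonneg_right (Real.rpow_le_rpow hb0 claim hp0.le) hr1q.le
      have hexpand : (K₁ * (A*A) * z) ^ p * r ^ (1-q)
          = K₁ ^ p * A ^ (2*p) * ρ ^ ε * r ^ (-(q/2)) := by
        rw [Real.mul_rpow (by positivity) hz0.le, Real.mul_rpow hK₁.le (by positivity)]
        have hAA : (A*A) ^ p = A ^ (2*p) := by
          rw [Real.mul_rpow hA0.le hA0.le, ← Real.rpow_add hA0]
          ring_nf
        have hzp : z ^ p = ρ ^ ε * r ^ (-ε) := by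
          rw [hzdef, ← Real.rpow_mul (by positivity), hδdef,
            div_mul_cancel₀ _ (ne_of_gt hp0), Real.div_rpow hρ0.le hr0.le,
            Real.rpow_neg hr0.le, div_eq_mul_inv]
        rw [hAA, hzp]
        have hrr : r ^ (-ε) * r ^ (1-q) = r ^ (-(q/2)) := by
          rw [← Real.rpow_add hr0]
          congr 1
          rw [hεdef]; ring
        calc K₁ ^ p * A ^ (2*p) * (ρ ^ ε * r ^ (-ε)) * r ^ (1-q)
            = K₁ ^ p * A ^ (2*p) * ρ ^ ε * (r ^ (-ε) * r ^ (1-q)) := by ring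
        _ = K₁ ^ p * A ^ (2*p) * ρ ^ ε * r ^ (-(q/2)) := by rw [hrr]
      simp only [hΦdef]
      rw [← hexpand] at hterm1 ⊢
      linarith [hstep1, hterm2]
    · -- bad region : 3/e < r < 3
      push_neg at hcase
      have hr1 : 1 < r := by
        have : (1:ℝ) < 3 / Real.exp 1 := by
          rw [lt_div_iff₀ (Real.exp_pos 1)]; linarith
        linarith
      have hx1 : Real.log (3 / r) < 1 := by
        rw [Real.log_lt_iff_lt_exp (by positivity), div_lt_iff₀ hr0]
        calc (3:ℝ) = Real.exp 1 * (3 / Real.exp 1) := by field_simp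
        _ < Real.exp 1 * r := mul_lt_mul_of_pos_left hcase (Real.exp_pos 1)
      set x := Real.log (3 / r) with hxdef
      clear_value x
      have hbneg : Real.log x < 0 := Real.log_neg hlogr_pos hx1
      have h1 : |Real.log x ^ p * r ^ (1-q)| ≤ |Real.log x| ^ p * r ^ (1-q) := by
        rw [abs_mul, abs_of_pos hr1q]
        exact mul_le_mul_of_nonneg_right (Real.abs_rpow_le_abs_rpow _ _) hr1q.le
      have hr1q1 : r ^ (1-q) ≤ 1 :=
        Real.rpow_le_one_of_one_le_of_nonpos hr1.le (by linarith)
      have hxlow : (3 - r)/3 ≤ x := by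
        have hl : Real.log (r/3) ≤ r/3 - 1 := Real.log_le_sub_one_of_pos (by positivity)
        have hlx : x = - Real.log (r/3) := by
          rw [hxdef, show (3:ℝ)/r = (r/3)⁻¹ by rw [inv_div], Real.log_inv]
        rw [hlx]; linarith
      have hxlow0 : (0:ℝ) < (3 - r)/3 := by positivity
      have habslog : |Real.log x| = Real.log x⁻¹ := by
        rw [Real.log_inv, abs_of_neg hbneg]
      have hw : x⁻¹ ≤ 3 / (3 - r) := by
        rw [show (3:ℝ)/(3-r) = ((3-r)/3)⁻¹ by rw [inv_div]]
        exact inv_anti₀ hxlow0 hxlow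
      have hwpos : (0:ℝ) < 3 / (3 - r) := by positivity
      have hlogw : Real.log x⁻¹ ≤ 2*p * (3/(3-r)) ^ ((2*p)⁻¹) := by
        have h2 : Real.log x⁻¹ ≤ Real.log (3/(3-r)) :=
          Real.log_le_log (by positivity) hw
        have h4 : (2*p)⁻¹ * Real.log (3/(3-r)) ≤ (3/(3-r)) ^ ((2*p)⁻¹) := by
          rw [← Real.log_rpow hwpos]
          exact Real.log_le_self (Real.rpow_nonneg hwpos.le _)
        have h2p : (0:ℝ) < 2*p := by linarith
        have h3' : Real.log (3/(3-r)) = 2*p * ((2*p)⁻¹ * Real.log (3/(3-r))) := by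
          field_simp
        have h5' : 2*p * ((2*p)⁻¹ * Real.log (3/(3-r)))
            ≤ 2*p * (3/(3-r)) ^ ((2*p)⁻¹) :=
          mul_le_mul_of_nonneg_left h4 h2p.le
        linarith [h3' ▸ h5']
      have hblognn : 0 ≤ |Real.log x| := abs_nonneg _
      have h5 : |Real.log x| ^ p ≤ (2*p * (3/(3-r)) ^ ((2*p)⁻¹)) ^ p := by
        apply Real.rpow_le_rpow hblognn _ hp0.le
        rw [habslog]; exact hlogw
      have h6 : (2*p * (3/(3-r)) ^ ((2*p)⁻¹)) ^ p = D₂ * (3 - r) ^ (-(1:ℝ)/2) := by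
        rw [Real.mul_rpow (by linarith) (Real.rpow_nonneg hwpos.le _),
          ← Real.rpow_mul (by positivity)]
        have hppe : (2*p)⁻¹ * p = (1:ℝ)/2 := by
          field_simp
        rw [hppe, Real.div_rpow (by norm_num) h3r0.le, hD2def,
          show ((-(1:ℝ))/2 : ℝ) = -((1:ℝ)/2) by norm_num, Real.rpow_neg h3r0.le,
          div_eq_mul_inv]
        ring
      calc |Real.log x ^ p * r ^ (1-q)| ≤ |Real.log x| ^ p * r ^ (1-q) := h1
      _ ≤ (2*p * (3/(3-r)) ^ ((2*p)⁻¹)) ^ p * 1 :=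
          mul_le_mul h5 hr1q1 hr1q.le (Real.rpow_nonneg (by positivity) _)
      _ = D₂ * (3 - r) ^ (-(1:ℝ)/2) := by rw [mul_one, h6]
      _ ≤ Φ r := by
          simp only [hΦdef]
          linarith [hterm1]
  -- continuity / measurability of the integrand on s
  have hFcont : ContinuousOn (fun r : ℝ => Real.log |Real.log (r / 3)| ^ p * r ^ (1 - q)) s := by
    rw [hsdef]
    rintro r ⟨hr0, hr3ρ⟩
    have hr3 : r < 3 := lt_of_le_of_lt hr3ρ h3ρ3
    apply ContinuousAt.continuousWithinAt
    have hrne : r / 3 ≠ 0 := by positivity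
    have hlogne : Real.log (r/3) ≠ 0 := by
      have : Real.log (r/3) < 0 :=
        Real.log_neg (by positivity) (by rw [div_lt_one (by norm_num : (0:ℝ) < 3)]; linarith)
      exact ne_of_lt this
    have l1 : ContinuousAt (fun t : ℝ => t / 3) r := continuousAt_id.div_const 3
    have l2 : ContinuousAt (fun t : ℝ => Real.log (t / 3)) r := l1.log hrne
    have l3 : ContinuousAt (fun t : ℝ => |Real.log (t / 3)|) r := l2.abs
    have l4 : ContinuousAt (fun t : ℝ => Real.log |Real.log (t / 3)|) r :=
      l3.log (abs_ne_zero.mpr hlogne)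
    have l5 : ContinuousAt (fun t : ℝ => Real.log |Real.log (t / 3)| ^ p) r :=
      l4.rpow_const (Or.inr hp0.le)
    have l6 : ContinuousAt (fun t : ℝ => t ^ (1 - q)) r :=
      continuousAt_id.rpow_const (Or.inl (ne_of_gt hr0))
    exact l5.mul l6
  have hcont2 : ContinuousOn (fun r : ℝ => (3 - r) ^ (-(1:ℝ)/2)) (Set.Icc 0 (3*ρ)) := by
    rintro r ⟨_, hr2⟩
    apply ContinuousAt.continuousWithinAt
    have h3r : (3:ℝ) - r ≠ 0 := by
      have : r < 3 := lt_of_le_of_lt hr2 h3ρ3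
      have : 0 < 3 - r := by linarith
      exact ne_of_gt this
    exact ((continuous_const.sub continuous_id).continuousAt).rpow_const (Or.inl h3r)
  have hint1 : IntegrableOn (fun r : ℝ => r ^ (-(q/2))) s := by
    rw [hsdef, ← intervalIntegrable_iff_integrableOn_Ioc_of_le hρ3.le]
    exact intervalIntegral.intervalIntegrable_rpow' (by linarith)
  have hint2 : IntegrableOn (fun r : ℝ => (3 - r) ^ (-(1:ℝ)/2)) s := by
    rw [hsdef]
    exact (hcont2.integrableOn_Icc).mono_set Set.Ioc_subset_Icc_self
  have hΦint : IntegrableOn Φ s := by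
    simp only [hΦdef]
    exact (hint1.const_mul _).add (hint2.const_mul _)
  have hFmeas : AEStronglyMeasurable
      (fun r : ℝ => Real.log |Real.log (r / 3)| ^ p * r ^ (1 - q)) (volume.restrict s) :=
    hFcont.aestronglyMeasurable hmeas
  have hFint : IntegrableOn
      (fun r : ℝ => Real.log |Real.log (r / 3)| ^ p * r ^ (1 - q)) s := by
    apply hΦint.mono' hFmeas
    rw [ae_restrict_iff' hmeas]
    exact ae_of_all _ (fun r hr => by rw [Real.norm_eq_abs]; exact key r hr)
  -- main computation
  rw [intervalIntegral.integral_of_le hρ3.le, ← hsdef]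
  have hmono : (∫ r in s, Real.log |Real.log (r / 3)| ^ p * r ^ (1 - q)) ≤ ∫ r in s, Φ r :=
    setIntegral_mono_on hFint hΦint hmeas (fun r hr => (le_abs_self _).trans (key r hr))
  have hsplit : (∫ r in s, Φ r)
      = (K₁ ^ p * A ^ (2*p) * ρ ^ ε) * (∫ r in s, r ^ (-(q/2)))
        + D₂ * (∫ r in s, (3 - r) ^ (-(1:ℝ)/2)) := by
    simp only [hΦdef]
    rw [MeasureTheory.integral_add (hint1.const_mul _) (hint2.const_mul _),
      MeasureTheory.integral_const_mul, MeasureTheory.integral_const_mul]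
  have hI1 : (∫ r in s, r ^ (-(q/2))) = (3*ρ) ^ ε / ε := by
    rw [hsdef, ← intervalIntegral.integral_of_le hρ3.le,
      integral_rpow (Or.inl (by linarith : (-1:ℝ) < -(q/2))),
      show -(q/2) + 1 = ε by rw [hεdef]; ring,
      Real.zero_rpow (ne_of_gt hε)]
    ring
  have hI2 : (∫ r in s, (3 - r) ^ (-(1:ℝ)/2)) ≤ 2 * (3:ℝ)^((1:ℝ)/2) * ρ := by
    have hderiv : ∀ u ∈ Set.uIcc (0:ℝ) (3*ρ),
        HasDerivAt (fun t : ℝ => -2 * (3 - t) ^ ((1:ℝ)/2)) ((3 - u) ^ (-(1:ℝ)/2)) u := by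
      intro u hu
      rw [Set.uIcc_of_le hρ3.le] at hu
      have hu3 : u < 3 := lt_of_le_of_lt hu.2 h3ρ3
      have h3u : (0:ℝ) < 3 - u := by linarith
      have hin : HasDerivAt (fun t : ℝ => 3 - t) (-1) u := by
        simpa using (hasDerivAt_id u).const_sub 3
      have hout : HasDerivAt (fun y : ℝ => y ^ ((1:ℝ)/2))
          (((1:ℝ)/2) * (3 - u) ^ ((1:ℝ)/2 - 1)) (3 - u) :=
        Real.hasDerivAt_rpow_const (Or.inl (ne_of_gt h3u))
      have hcomp := (hout.comp u hin).const_mul (-2 : ℝ)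
      have : HasDerivAt (fun t : ℝ => -2 * (3 - t) ^ ((1:ℝ)/2))
          (-2 * (((1:ℝ)/2) * (3 - u) ^ ((1:ℝ)/2 - 1) * -1)) u := hcomp
      convert this using 1
      rw [show ((1:ℝ)/2 - 1 : ℝ) = -((1:ℝ)/2) by norm_num,
        show ((-(1:ℝ))/2 : ℝ) = -((1:ℝ)/2) by norm_num]
      ring
    have hintegr : IntervalIntegrable (fun r : ℝ => (3 - r) ^ (-(1:ℝ)/2)) volume 0 (3*ρ) := by
      rw [intervalIntegrable_iff_integrableOn_Ioc_of_le hρ3.le]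
      rw [hsdef] at hint2; exact hint2
    have hval : (∫ r in s, (3 - r) ^ (-(1:ℝ)/2))
        = -2 * (3 - 3*ρ) ^ ((1:ℝ)/2) - (-2 * (3 - 0) ^ ((1:ℝ)/2)) := by
      rw [hsdef, ← intervalIntegral.integral_of_le hρ3.le]
      exact integral_eq_sub_of_hasDerivAt hderiv hintegr
    rw [hval, sub_zero]
    have h1ρ : (0:ℝ) < 1 - ρ := by linarith
    have hge : (3:ℝ)^((1:ℝ)/2) * (1 - ρ) ≤ (3 - 3*ρ) ^ ((1:ℝ)/2) := by
      rw [show (3:ℝ) - 3*ρ = 3 * (1 - ρ) by ring, Real.mul_rpow (by norm_num) h1ρ.le]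
      apply mul_le_mul_of_nonneg_left _ (Real.rpow_nonneg (by norm_num) _)
      calc (1 - ρ) = (1 - ρ) ^ (1:ℝ) := (Real.rpow_one _).symm
      _ ≤ (1 - ρ) ^ ((1:ℝ)/2) :=
        Real.rpow_le_rpow_of_exponent_ge h1ρ (by linarith) (by norm_num)
    linarith [hge]
  -- assemble
  have hAp2 : (0:ℝ) < A ^ (2*p) := Real.rpow_pos_of_pos hA0 _
  have hA2p : c ^ (2*p) ≤ A ^ (2*p) := Real.rpow_le_rpow hc.le hA (by positivity)
  have hρpow : ρ ≤ ρ ^ (2 - q) := by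
    calc ρ = ρ ^ (1:ℝ) := (Real.rpow_one ρ).symm
    _ ≤ ρ ^ (2 - q) := Real.rpow_le_rpow_of_exponent_ge hρ0 hρ1.le (by linarith)
  have hρq : (0:ℝ) < ρ ^ (2 - q) := Real.rpow_pos_of_pos hρ0 _
  have hcomb : ρ ^ ε * ((3*ρ) ^ ε / ε) = (3:ℝ)^ε / ε * ρ ^ (2 - q) := by
    rw [Real.mul_rpow (by norm_num) hρ0.le]
    rw [show ρ ^ ε * ((3:ℝ)^ε * ρ^ε / ε) = (3:ℝ)^ε / ε * (ρ^ε * ρ^ε) by ring,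
      ← Real.rpow_add hρ0, show ε + ε = 2 - q by rw [hεdef]; ring]
  have hterm2fin : D₂ * (2 * (3:ℝ)^((1:ℝ)/2) * ρ)
      ≤ 2 * (3:ℝ)^((1:ℝ)/2) * D₂ / c ^ (2*p) * A ^ (2*p) * ρ ^ (2 - q) := by
    have hY : (0:ℝ) ≤ 2 * (3:ℝ)^((1:ℝ)/2) * D₂ := by positivity
    have e1 : D₂ * (2 * (3:ℝ)^((1:ℝ)/2) * ρ) ≤ 2 * (3:ℝ)^((1:ℝ)/2) * D₂ * ρ ^ (2-q) := by
      have := mul_le_mul_of_nonneg_left hρpow hY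
      linarith [this]
    have e2 : 2 * (3:ℝ)^((1:ℝ)/2) * D₂ * ρ ^ (2-q)
        ≤ 2 * (3:ℝ)^((1:ℝ)/2) * D₂ / c ^ (2*p) * A ^ (2*p) * ρ ^ (2-q) := by
      rw [div_mul_eq_mul_div, div_mul_eq_mul_div, le_div_iff₀ hc2p]
      have := mul_le_mul_of_nonneg_left hA2p
        (show (0:ℝ) ≤ 2 * (3:ℝ)^((1:ℝ)/2) * D₂ * ρ ^ (2-q) by positivity)
      linarith [this]
    linarith
  have hterm1fin : (K₁ ^ p * A ^ (2*p) * ρ ^ ε) * ((3*ρ) ^ ε / ε)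
      = K₁ ^ p * (3:ℝ)^ε / ε * A ^ (2*p) * ρ ^ (2 - q) := by
    calc (K₁ ^ p * A ^ (2*p) * ρ ^ ε) * ((3*ρ) ^ ε / ε)
        = K₁ ^ p * A ^ (2*p) * (ρ ^ ε * ((3*ρ) ^ ε / ε)) := by ring
    _ = K₁ ^ p * A ^ (2*p) * ((3:ℝ)^ε / ε * ρ ^ (2 - q)) := by rw [hcomb]
    _ = K₁ ^ p * (3:ℝ)^ε / ε * A ^ (2*p) * ρ ^ (2 - q) := by ring
  have hI2' : D₂ * (∫ r in s, (3 - r) ^ (-(1:ℝ)/2)) ≤ D₂ * (2 * (3:ℝ)^((1:ℝ)/2) * ρ) :=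
    mul_le_mul_of_nonneg_left hI2 hD₂.le
  have hexp : (2 * α * q : ℝ) = 2 * p := by rw [hpdef]; ring
  rw [hexp]
  calc (∫ r in s, Real.log |Real.log (r / 3)| ^ p * r ^ (1 - q))
      ≤ ∫ r in s, Φ r := hmono
  _ = (K₁ ^ p * A ^ (2*p) * ρ ^ ε) * (∫ r in s, r ^ (-(q/2)))
        + D₂ * (∫ r in s, (3 - r) ^ (-(1:ℝ)/2)) := hsplit
  _ ≤ (K₁ ^ p * A ^ (2*p) * ρ ^ ε) * ((3*ρ) ^ ε / ε) + D₂ * (2 * (3:ℝ)^((1:ℝ)/2) * ρ) := by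
      rw [hI1]; linarith [hI2']
  _ ≤ K₁ ^ p * (3:ℝ)^ε / ε * A ^ (2*p) * ρ ^ (2 - q)
        + 2 * (3:ℝ)^((1:ℝ)/2) * D₂ / c ^ (2*p) * A ^ (2*p) * ρ ^ (2 - q) := by
      rw [hterm1fin]; linarith [hterm2fin]
  _ = (K₁ ^ p * (3:ℝ)^ε / ε + 2 * (3:ℝ)^((1:ℝ)/2) * D₂ / c ^ (2*p)) * A ^ (2*p) * ρ ^ (2 - q) := by
      ring
end

section
/- Let c₀ ∈ (0,2) and M > 1 large, and suppose g: (0,∞) → [0,∞) satisfies g(R) ≤ min{R, (ln(3M/R))^{−c₀}/R} for R ∈ (0,1], g(R) ≤ min{1/R, (ln(3M/R))^{−c₀}/R²} for R ∈ (1,M), and g(R) ≤ 1/R² for R ≥ M. Then ∫_0^∞ g(R) dR ≤ C (ln 3M)^{−c₀/2} for a constant C depending only on c₀. -/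
open Real MeasureTheory

open Set in
/-- Combining the three regimes: if `g ≤ min{R, (ln(3M/R))^{−c₀}/R}` on `(0,1]`,
`g ≤ min{1/R, (ln(3M/R))^{−c₀}/R²}` on `(1,M)` and `g ≤ 1/R²` on `[M,∞)`, then
`∫_0^∞ g ≤ C (ln 3M)^{−c₀/2}`. -/
theorem stmt_11 (c₀ : ℝ) (hc₀ : c₀ ∈ Set.Ioo (0:ℝ) 2) :
    ∃ C > (0:ℝ), ∃ M₀ > (1:ℝ), ∀ M ≥ M₀,
      ∀ g : ℝ → ℝ, Measurable g → (∀ R, 0 ≤ g R) →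
        (∀ R ∈ Set.Ioc (0:ℝ) 1,
          g R ≤ min R ((Real.log (3 * M / R)) ^ (-c₀) / R)) →
        (∀ R ∈ Set.Ioo (1:ℝ) M,
          g R ≤ min (1 / R) ((Real.log (3 * M / R)) ^ (-c₀) / R ^ 2)) →
        (∀ R ≥ M, g R ≤ 1 / R ^ 2) →
        (∫ R in Set.Ioi (0:ℝ), g R) ≤ C * (Real.log (3 * M)) ^ (-c₀ / 2) := by
  obtain ⟨hc0, hc2⟩ := hc₀
  refine ⟨6, by norm_num, 4096, by norm_num, ?_⟩
  intro M hM g hgm hg0 h1 h2 h3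
  have hM1 : (1:ℝ) < M := by linarith
  have hM0 : (0:ℝ) < M := by linarith
  set L := Real.log (3*M) with hLdef
  have hL1 : 1 ≤ L := by
    rw [hLdef, Real.le_log_iff_exp_le (by positivity)]
    have := Real.exp_one_lt_d9
    nlinarith
  have hLpos : 0 < L := lt_of_lt_of_le one_pos hL1
  set K := L ^ (-c₀/2) with hKdef
  have hKpos : 0 < K := Real.rpow_pos_of_pos hLpos _
  have hK1 : K ≤ 1 := Real.rpow_le_one_of_one_le_of_nonpos hL1 (by linarith)
  have hKK : L ^ (-c₀) = K * K := by
    rw [hKdef, ← Real.rpow_add hLpos]; ring_nf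
  set t := M ^ ((1:ℝ)/2) with htdef
  have htpos : 0 < t := Real.rpow_pos_of_pos hM0 _
  have ht1 : 1 < t := by
    rw [htdef]
    exact Real.one_lt_rpow_iff_of_pos hM0 |>.2 (Or.inl ⟨hM1, by norm_num⟩)
  have htt : t * t = M := by
    rw [htdef, ← Real.rpow_add hM0]; norm_num
  have htM : t < M := by nlinarith
  -- log (3M) ≤ √M
  have hq : (8:ℝ) ≤ M ^ ((1:ℝ)/4) := by
    have h1' : ((4096:ℝ)) ^ ((1:ℝ)/4) ≤ M ^ ((1:ℝ)/4) :=
      Real.rpow_le_rpow (by norm_num) hM (by norm_num)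
    have h2' : ((4096:ℝ)) ^ ((1:ℝ)/4) = 8 := by
      rw [show (4096:ℝ) = 8 ^ (4:ℕ) by norm_num, ← Real.rpow_natCast 8 4,
        ← Real.rpow_mul (by norm_num)]
      norm_num
    linarith
  have hLt : L ≤ t := by
    have h1' : Real.log M ≤ M ^ ((1:ℝ)/4) / ((1:ℝ)/4) :=
      Real.log_le_rpow_div hM0.le (by norm_num)
    have h2' : L ≤ 2 * Real.log M := by
      have h : L ≤ Real.log M + Real.log M := by
        rw [hLdef, ← Real.log_mul hM0.ne' hM0.ne']
        exact Real.log_le_log (by positivity) (by nlinarith)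
      linarith
    have h3' : t = M ^ ((1:ℝ)/4) * M ^ ((1:ℝ)/4) := by
      rw [htdef, ← Real.rpow_add hM0]; norm_num
    have h4' : 0 < M ^ ((1:ℝ)/4) := Real.rpow_pos_of_pos hM0 _
    nlinarith
  -- 1/t ≤ K
  have hinvt : 1 / t ≤ K := by
    have h1' : L ^ (c₀/2) ≤ L ^ (1:ℝ) :=
      Real.rpow_le_rpow_of_exponent_le hL1 (by linarith)
    rw [Real.rpow_one] at h1'
    have h3' : 0 < L ^ (c₀/2) := Real.rpow_pos_of_pos hLpos _
    have h4' : K = (L ^ (c₀/2))⁻¹ := by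
      rw [hKdef, show -c₀/2 = -(c₀/2) by ring, Real.rpow_neg hLpos.le]
    rw [h4', one_div]
    exact inv_anti₀ h3' (le_trans h1' hLt)
  -- antitone in base for negative exponent
  have anti : ∀ x y : ℝ, 0 < x → x ≤ y → y ^ (-c₀) ≤ x ^ (-c₀) := fun x y hx hxy =>
    Real.rpow_le_rpow_of_nonpos hx hxy (by linarith)
  have hlogt : Real.log t = (1/2) * Real.log M := by
    rw [htdef, Real.log_rpow hM0]
  clear_value L K t
  -- pointwise bound on (0,1]
  have B1 : ∀ R ∈ Ioc (0:ℝ) 1, g R ≤ K := by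
    intro R hR
    have hRpos : 0 < R := hR.1
    have hb := h1 R hR
    have hlog : L ≤ Real.log (3*M/R) := by
      rw [hLdef]
      apply Real.log_le_log (by positivity)
      rw [le_div_iff₀ hRpos]
      nlinarith [hR.2]
    have hA : (Real.log (3*M/R)) ^ (-c₀) ≤ K * K := by
      rw [← hKK]; exact anti L _ hLpos hlog
    rcases le_or_gt R K with h | h
    · exact le_trans (le_trans hb (min_le_left _ _)) h
    · have h5 : g R ≤ (Real.log (3*M/R)) ^ (-c₀) / R := le_trans hb (min_le_right _ _)
      have h6 : (Real.log (3*M/R)) ^ (-c₀) / R ≤ (K*K) / K :=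
        div_le_div₀ (by positivity) hA hKpos h.le
      have h7 : (K*K)/K = K := by field_simp
      rw [h7] at h6
      exact le_trans h5 h6
  -- pointwise bound on (1, t]
  have B2 : ∀ R ∈ Ioc (1:ℝ) t, g R ≤ 4 * (K*K) * (1 / R^2) := by
    intro R hR
    have hR1 : 1 < R := hR.1
    have hRpos : 0 < R := lt_trans one_pos hR1
    have hb := h2 R ⟨hR.1, lt_of_le_of_lt hR.2 htM⟩
    have hlog : L/2 ≤ Real.log (3*M/R) := by
      have hlogM : Real.log M ≤ L := by
        rw [hLdef]; exact Real.log_le_log hM0 (by linarith)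
      have h7' : 3*M/t ≤ 3*M/R :=
        div_le_div_of_nonneg_left (by positivity) hRpos hR.2
      have h7 : Real.log (3*M/t) ≤ Real.log (3*M/R) :=
        Real.log_le_log (by positivity) h7'
      rw [Real.log_div (by positivity) htpos.ne', ← hLdef, hlogt] at h7
      linarith
    have hA : (Real.log (3*M/R)) ^ (-c₀) ≤ 4 * (K*K) := by
      have h8 : (Real.log (3*M/R)) ^ (-c₀) ≤ (L/2) ^ (-c₀) :=
        anti (L/2) _ (by linarith) hlog
      have h9 : (L/2) ^ (-c₀) = L ^ (-c₀) * (2:ℝ) ^ c₀ := by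
        rw [Real.div_rpow hLpos.le (by norm_num : (0:ℝ) ≤ 2),
          Real.rpow_neg (by norm_num : (0:ℝ) ≤ 2) c₀, div_eq_mul_inv, inv_inv]
      have h10 : (2:ℝ) ^ c₀ ≤ 4 := by
        have := Real.rpow_le_rpow_of_exponent_le (by norm_num : (1:ℝ) ≤ 2) hc2.le
        rwa [show ((2:ℝ):ℝ) ^ (2:ℝ) = 4 by
          rw [show (2:ℝ) = ((2:ℕ):ℝ) by norm_num, Real.rpow_natCast]; norm_num] at this
      calc (Real.log (3*M/R)) ^ (-c₀) ≤ L ^ (-c₀) * (2:ℝ) ^ c₀ := by rw [← h9]; exact h8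
        _ ≤ L ^ (-c₀) * 4 := by
            apply mul_le_mul_of_nonneg_left h10 (Real.rpow_nonneg hLpos.le _)
        _ = 4 * (K*K) := by rw [hKK]; ring
    have h5 : g R ≤ (Real.log (3*M/R)) ^ (-c₀) / R^2 := le_trans hb (min_le_right _ _)
    calc g R ≤ (4*(K*K)) / R^2 :=
          le_trans h5 (div_le_div_of_nonneg_right hA (by positivity))
      _ = 4 * (K*K) * (1/R^2) := by ring
  -- pointwise bound on (t, ∞)
  have B3 : ∀ R ∈ Ioi t, g R ≤ 1 / R^2 := by
    intro R hR
    have hRt : t < R := hR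
    have hRpos : 0 < R := lt_trans htpos hRt
    rcases le_or_gt M R with h | h
    · exact h3 R h
    · have hb := h2 R ⟨lt_trans ht1 hRt, h⟩
      have hlog : 1 ≤ Real.log (3*M/R) := by
        rw [Real.le_log_iff_exp_le (by positivity)]
        have := Real.exp_one_lt_d9
        rw [le_div_iff₀ hRpos]
        nlinarith
      have hA : (Real.log (3*M/R)) ^ (-c₀) ≤ 1 :=
        Real.rpow_le_one_of_one_le_of_nonpos hlog (by linarith)
      have h5 : g R ≤ (Real.log (3*M/R)) ^ (-c₀) / R^2 := le_trans hb (min_le_right _ _)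
      exact le_trans h5 (div_le_div_of_nonneg_right hA (by positivity))
  -- integrability of R ^ (-2)
  have hpow : ∀ R : ℝ, 0 < R → R ^ ((-2):ℝ) = 1 / R^2 := by
    intro R hR
    rw [show ((-2):ℝ) = -((2:ℕ):ℝ) by norm_num, Real.rpow_neg hR.le,
      Real.rpow_natCast, one_div]
  have hint1 : IntegrableOn (fun R : ℝ => R ^ ((-2):ℝ)) (Ioi (1:ℝ)) :=
    integrableOn_Ioi_rpow_of_lt (by norm_num) one_pos
  have hintt : IntegrableOn (fun R : ℝ => R ^ ((-2):ℝ)) (Ioi t) :=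
    integrableOn_Ioi_rpow_of_lt (by norm_num) htpos
  -- integrability of g on the three pieces
  have hg1 : IntegrableOn g (Ioc (0:ℝ) 1) := by
    apply Integrable.mono' (integrableOn_const (C := K) measure_Ioc_lt_top.ne)
      hgm.aestronglyMeasurable.restrict
    filter_upwards [ae_restrict_mem measurableSet_Ioc] with R hR
    rw [Real.norm_eq_abs, abs_of_nonneg (hg0 R)]
    exact B1 R hR
  have hbound2 : IntegrableOn (fun R : ℝ => 4 * (K*K) * (1/R^2)) (Ioc (1:ℝ) t) := by
    have hmul : IntegrableOn (fun R : ℝ => 4*(K*K) * R ^ ((-2):ℝ)) (Ioi (1:ℝ)) :=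
      hint1.const_mul _
    apply (hmul.mono_set Ioc_subset_Ioi_self).congr_fun _ measurableSet_Ioc
    intro R hR
    simp only [hpow R (lt_trans one_pos hR.1)]
  have hg2 : IntegrableOn g (Ioc (1:ℝ) t) := by
    apply Integrable.mono' hbound2 hgm.aestronglyMeasurable.restrict
    filter_upwards [ae_restrict_mem measurableSet_Ioc] with R hR
    rw [Real.norm_eq_abs, abs_of_nonneg (hg0 R)]
    exact B2 R hR
  have hbound3 : IntegrableOn (fun R : ℝ => 1/R^2) (Ioi t) := by
    apply hintt.congr_fun _ measurableSet_Ioi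
    intro R hR
    simp only [hpow R (lt_trans htpos hR)]
  have hg3 : IntegrableOn g (Ioi t) := by
    apply Integrable.mono' hbound3 hgm.aestronglyMeasurable.restrict
    filter_upwards [ae_restrict_mem measurableSet_Ioi] with R hR
    rw [Real.norm_eq_abs, abs_of_nonneg (hg0 R)]
    exact B3 R hR
  -- split the integral
  have hdisj1 : Disjoint (Ioc (1:ℝ) t) (Ioi t) := by
    rw [Set.disjoint_left]
    rintro x ⟨_, hx⟩ hx'
    exact absurd hx' (not_lt.mpr hx)
  have hdisj2 : Disjoint (Ioc (0:ℝ) 1) (Ioi (1:ℝ)) := by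
    rw [Set.disjoint_left]
    rintro x ⟨_, hx⟩ hx'
    exact absurd hx' (not_lt.mpr hx)
  have hunion1 : Ioc (1:ℝ) t ∪ Ioi t = Ioi (1:ℝ) := Ioc_union_Ioi_eq_Ioi ht1.le
  have hunion2 : Ioc (0:ℝ) 1 ∪ Ioi (1:ℝ) = Ioi (0:ℝ) := Ioc_union_Ioi_eq_Ioi (by norm_num)
  have hg23 : IntegrableOn g (Ioi (1:ℝ)) := by
    rw [← hunion1]; exact hg2.union hg3
  have hsplit : (∫ R in Ioi (0:ℝ), g R) =
      (∫ R in Ioc (0:ℝ) 1, g R) + ((∫ R in Ioc (1:ℝ) t, g R) + ∫ R in Ioi t, g R) := by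
    rw [← setIntegral_union hdisj1 measurableSet_Ioi hg2 hg3, hunion1,
      ← setIntegral_union hdisj2 measurableSet_Ioi hg1 hg23, hunion2]
  -- estimate each piece
  have I1 : (∫ R in Ioc (0:ℝ) 1, g R) ≤ K := by
    have := setIntegral_mono_on hg1
      (integrableOn_const measure_Ioc_lt_top.ne) measurableSet_Ioc B1
    rwa [setIntegral_const, Real.volume_real_Ioc_of_le (by norm_num), smul_eq_mul,
      show (1:ℝ) - 0 = 1 by norm_num, one_mul] at this
  have I2 : (∫ R in Ioc (1:ℝ) t, g R) ≤ 4 * K := by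
    have hm := setIntegral_mono_on hg2 hbound2 measurableSet_Ioc B2
    have hmono : (∫ R in Ioc (1:ℝ) t, 4 * (K*K) * (1/R^2))
        ≤ ∫ R in Ioi (1:ℝ), 4 * (K*K) * R ^ ((-2):ℝ) := by
      have heq : (∫ R in Ioc (1:ℝ) t, 4 * (K*K) * (1/R^2))
          = ∫ R in Ioc (1:ℝ) t, 4 * (K*K) * R ^ ((-2):ℝ) := by
        apply setIntegral_congr_fun measurableSet_Ioc
        intro R hR
        simp only [hpow R (lt_trans one_pos hR.1)]
      rw [heq]
      apply setIntegral_mono_set (hint1.const_mul _)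
      · filter_upwards [ae_restrict_mem measurableSet_Ioi] with R hR
        have : (0:ℝ) < R := lt_trans one_pos hR
        positivity
      · exact HasSubset.Subset.eventuallyLE Ioc_subset_Ioi_self
    have hval : (∫ R in Ioi (1:ℝ), 4 * (K*K) * R ^ ((-2):ℝ)) = 4 * (K*K) := by
      rw [integral_const_mul, integral_Ioi_rpow_of_lt (by norm_num) one_pos]
      norm_num
    have hKK1 : K * K ≤ K := by
      have := mul_le_mul_of_nonneg_right hK1 hKpos.le
      rwa [one_mul] at this
    have hKKK : 4 * (K*K) ≤ 4 * K :=
      mul_le_mul_of_nonneg_left hKK1 (by norm_num)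
    exact le_trans hm (le_trans hmono (le_of_eq hval |>.trans hKKK))
  have I3 : (∫ R in Ioi t, g R) ≤ K := by
    have hm := setIntegral_mono_on hg3 hbound3 measurableSet_Ioi B3
    have heq : (∫ R in Ioi t, 1/R^2) = ∫ R in Ioi t, R ^ ((-2):ℝ) := by
      apply setIntegral_congr_fun measurableSet_Ioi
      intro R hR
      simp only [hpow R (lt_trans htpos hR)]
    have hval : (∫ R in Ioi t, R ^ ((-2):ℝ)) = 1/t := by
      rw [integral_Ioi_rpow_of_lt (by norm_num) htpos]
      rw [show ((-2):ℝ) + 1 = -1 by norm_num, Real.rpow_neg_one]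
      field_simp
    rw [heq, hval] at hm
    exact le_trans hm hinvt
  rw [hsplit]
  have hsum := add_le_add I1 (add_le_add I2 I3)
  exact le_of_le_of_eq hsum (by ring)
end
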